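/- Let X be a compact metric space. Suppose for every δ > 0 there exist a closed subspace K_δ ⊆ X homeomorphic to a finite tree (a 1-dimensional contractible simplicial complex), a retraction p_δ: X → K_δ and a homotopy H from id_X to ι∘p_δ with diam{H(x,t) : t ∈ [0,1]} ≤ δ for all x. Then X is contractible (being δ-dominated by contractible spaces for all δ with compactness). -/
import Mathlib


/-- Let `X` be a compact metric space such that for every `δ > 0` there are a closed
contractible subspace `K ⊆ X` (a finite tree in the intended application), a retraction
`p : X → K`, and a homotopy `H` from `id_X` to the composition of `p` with the inclusion,
all of whose tracks have diameter at most `δ`.  Then `X` is contractible. -/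
theorem contractible_of_small_tree_domination {X : Type*} [MetricSpace X] [CompactSpace X]
    (h : ∀ δ : ℝ, 0 < δ → ∃ K : Set X, IsClosed K ∧ ContractibleSpace K ∧
      ∃ p : X → K, Continuous p ∧ (∀ k : K, p (k : X) = k) ∧
        ∃ H : X → ℝ → X, (Continuous fun z : X × ℝ => H z.1 z.2) ∧
          (∀ x : X, H x 0 = x) ∧ (∀ x : X, H x 1 = (p x : X)) ∧
          ∀ x : X, Metric.diam {y | ∃ t ∈ Set.Icc (0 : ℝ) 1, H x t = y} ≤ δ) :
    ContractibleSpace X := by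
  obtain ⟨K, -, hKc, p, hp, hpk, H, hH, hH0, hH1, -⟩ := h 1 one_pos
  let f : C(X, K) := ⟨p, hp⟩
  let g : C(K, X) := ⟨Subtype.val, continuous_subtype_val⟩
  have hfg : f.comp g = ContinuousMap.id K := by
    ext k
    exact congrArg Subtype.val (hpk k)
  have hgf : (g.comp f).Homotopic (ContinuousMap.id X) := by
    refine ⟨⟨⟨fun z => H z.2 (1 - (z.1 : ℝ)), ?_⟩, ?_, ?_⟩⟩
    · exact hH.comp (continuous_snd.prodMk (continuous_const.sub (continuous_induced_dom.comp continuous_fst)))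
    · intro x; simp [hH1 x, f, g]
    · intro x; simp [hH0 x]
  have e : ContinuousMap.HomotopyEquiv X K :=
    { toFun := f
      invFun := g
      left_inv := hgf
      right_inv := hfg ▸ (ContinuousMap.Homotopic.refl _) }
  exact e.contractibleSpace
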